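/- Define the bivariate polynomials Q^{−1}_{0,0}(z,w) = 1 and, for integers k, j ≥ 1, Q^{−1}_{k,j}(z,w) = (1−zw) Q^1_{k−1,j−1}(z,w). Then these polynomials satisfy 2(1−zw) ∂²/∂z∂z̄ Q^{−1}_{k,j}(z,w) = −2kj · Q^{−1}_{k,j}(z,w), i.e. L_{−1} Q^{−1}_{k,j} = λ^{−1}_{k,j} Q^{−1}_{k,j} with λ^{−1}_{k,j} = −2kj, where L_{−1} = 2(1−zw) ∂²/∂z∂z̄. -/

import Mathlib

noncomputable def jacobiP (α β : ℝ) (n : ℕ) : Polynomial ℝ :=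
  (n.factorial : ℝ)⁻¹ •
    ∑ k ∈ Finset.range (n + 1),
      ((n.choose k : ℝ) * ((ascPochhammer ℝ (n - k)).eval ((k : ℝ) + α + 1)) *
          ((ascPochhammer ℝ k).eval ((n : ℝ) + α + β + 1))) •
        ((Polynomial.X - 1) * Polynomial.C (2⁻¹ : ℝ)) ^ k

noncomputable def zernikeQ (μ : ℝ) (k j : ℕ) : MvPolynomial (Fin 2) ℂ :=
  if j ≤ k then
    MvPolynomial.C ((((j.factorial : ℝ) / ((ascPochhammer ℝ j).eval (μ + 1)) : ℝ) : ℂ)) *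
      MvPolynomial.X 0 ^ (k - j) *
      Polynomial.aeval (2 * MvPolynomial.X 0 * MvPolynomial.X 1 - 1)
        (jacobiP μ ((k - j : ℕ) : ℝ) j)
  else
    MvPolynomial.C ((((k.factorial : ℝ) / ((ascPochhammer ℝ k).eval (μ + 1)) : ℝ) : ℂ)) *
      MvPolynomial.X 1 ^ (j - k) *
      Polynomial.aeval (2 * MvPolynomial.X 0 * MvPolynomial.X 1 - 1)
        (jacobiP μ ((j - k : ℕ) : ℝ) k)

/-!
Up to a constant factor, `Q^1_{k-1,j-1}` is `z^m q(zw - 1)` for `j ≤ k`, where `m = k - j`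
and `q(s) = n! P_n^{(1,m)}(1 + 2s)` with `n = j - 1` (for `k < j` swap the roles of `z` and `w`).
So `(1 - zw) Q^1_{k-1,j-1}` is, up to that constant, `-z^m F(zw - 1)` with `F = s q`, and the
chain rule gives `∂_z ∂_w (z^m F(zw - 1)) = z^m ((s + 1) F'' + (m + 1) F')(zw - 1)`.
In the variable `s` the Jacobi equation is the hypergeometric equation
`s(s + 1) q'' + (2 + (m + 3) s) q' = n(n + m + 2) q`, read off from a two-term recurrence for the
coefficients of `q`; it turns `(s + 1) F'' + (m + 1) F'` into `(n + 1)(n + m + 1) q = k j q`.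
-/

section

open Polynomial

noncomputable def jacobiCoeff (α β : ℝ) (n k : ℕ) : ℝ :=
  n.choose k * (ascPochhammer ℝ (n - k)).eval (k + α + 1) *
    (ascPochhammer ℝ k).eval (n + α + β + 1)

theorem jacobiCoeff_eq_zero_of_lt {α β : ℝ} {n k : ℕ} (h : n < k) :
    jacobiCoeff α β n k = 0 := by
  simp [jacobiCoeff, Nat.choose_eq_zero_of_lt h]

theorem ascPochhammer_succ_eval_left {S : Type*} [CommSemiring S] (n : ℕ) (x : S) :
    (ascPochhammer S (n + 1)).eval x = x * (ascPochhammer S n).eval (x + 1) := by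
  simp [ascPochhammer_succ_left]

theorem jacobiCoeff_succ (α β : ℝ) (n k : ℕ) :
    (k + 1) * (k + α + 1) * jacobiCoeff α β n (k + 1) =
      (n - k) * (n + k + α + β + 1) * jacobiCoeff α β n k := by
  rcases lt_or_ge k n with hk | hk
  · obtain ⟨d, rfl⟩ : ∃ d, n = k + 1 + d := ⟨n - (k + 1), by omega⟩
    have hchoose : ((k + 1 + d).choose (k + 1) : ℝ) * (k + 1) =
        (k + 1 + d).choose k * (d + 1) := by
      exact_mod_cast (Nat.choose_succ_right_eq (k + 1 + d) k).trans (by congr 1; omega)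
    rw [jacobiCoeff, jacobiCoeff, show k + 1 + d - k = d + 1 by omega, Nat.add_sub_cancel_left,
      ascPochhammer_succ_eval_left d, ascPochhammer_succ_eval k]
    push_cast
    rw [show (k : ℝ) + 1 + α + 1 = k + α + 1 + 1 by ring]
    linear_combination (k + α + 1) * (ascPochhammer ℝ d).eval (k + α + 1 + 1) *
      (ascPochhammer ℝ k).eval (k + 1 + d + α + β + 1) * (k + 1 + d + α + β + 1 + k) * hchoose
  · rw [jacobiCoeff_eq_zero_of_lt (Nat.lt_succ_of_le hk)]
    rcases hk.eq_or_lt with rfl | hk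
    · simp
    · simp [jacobiCoeff_eq_zero_of_lt hk]

/-- `n! P_n^{(α,β)}(1 + 2s)` as a polynomial in `s`. -/
noncomputable def jacobiHyp (α β : ℝ) (n : ℕ) : ℝ[X] :=
  ∑ k ∈ Finset.range (n + 1), C (jacobiCoeff α β n k) * X ^ k

theorem coeff_jacobiHyp (α β : ℝ) (n m : ℕ) :
    (jacobiHyp α β n).coeff m = jacobiCoeff α β n m := by
  simp only [jacobiHyp, finsetSum_coeff, coeff_C_mul_X_pow, Finset.sum_ite_eq, Finset.mem_range]
  split_ifs with h
  · rfl
  · exact (jacobiCoeff_eq_zero_of_lt (by omega)).symm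

theorem coeff_X_mul_derivative {R : Type*} [Semiring R] (p : R[X]) (m : ℕ) :
    (X * derivative p).coeff m = m * p.coeff m := by
  cases m with
  | zero => simp
  | succ m => rw [coeff_X_mul, coeff_derivative, ← Nat.cast_succ, Nat.cast_comm]

theorem jacobiHyp_ode (α β : ℝ) (n : ℕ) :
    X * (X + 1) * derivative (derivative (jacobiHyp α β n)) +
        (C (α + 1) + C (α + β + 2) * X) * derivative (jacobiHyp α β n) =
      C (n * (n + α + β + 1)) * jacobiHyp α β n := by
  set p := jacobiHyp α β n
  have euler_form : X * (X + 1) * derivative (derivative p) +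
        (C (α + 1) + C (α + β + 2) * X) * derivative p =
      X * derivative (X * derivative p) + C (α + β + 1) * (X * derivative p) +
        derivative (X * derivative p + C α * p) := by
    simp only [derivative_mul, derivative_X, derivative_C, map_add, map_one, map_ofNat]
    ring
  rw [euler_form]
  ext m
  simp only [coeff_add, coeff_C_mul, coeff_X_mul_derivative, coeff_derivative, coeff_jacobiHyp, p]
  push_cast
  linear_combination jacobiCoeff_succ α β n m

theorem jacobiHyp_one_X_mul_ode (β : ℝ) (n : ℕ) :
    (X + 1) * derivative (derivative (X * jacobiHyp 1 β n)) +
        C (β + 1) * derivative (X * jacobiHyp 1 β n) =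
      C ((n + 1) * (n + β + 1)) * jacobiHyp 1 β n := by
  have ode := jacobiHyp_ode 1 β n
  simp only [derivative_mul, derivative_X, one_mul, map_add, map_mul,
    map_one, map_ofNat, map_natCast] at ode ⊢
  linear_combination ode

theorem aeval_jacobiP {A : Type*} [CommRing A] [Algebra ℝ A] (α β : ℝ) (n : ℕ) (a : A) :
    aeval (2 * a - 1) (jacobiP α β n) =
      (n.factorial : ℝ)⁻¹ • aeval (a - 1) (jacobiHyp α β n) := by
  have hsubst : aeval (2 * a - 1) ((X - 1) * C (2⁻¹ : ℝ)) = a - 1 := by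
    rw [map_mul, map_sub, aeval_X, map_one, aeval_C, Algebra.algebraMap_eq_smul_one, mul_smul_one,
      show 2 * a - 1 - 1 = (2 : ℝ) • (a - 1) by rw [two_smul]; ring, smul_smul]
    norm_num
  simp only [jacobiP, jacobiHyp, map_smul, map_sum, map_pow, hsubst, map_mul, aeval_C]
  simp only [Algebra.smul_def, jacobiCoeff, aeval_X]

end

section

open MvPolynomial
open Polynomial (derivative)
open scoped Polynomial

theorem pderiv_pderiv_comm {σ A : Type*} [CommSemiring A] (i j : σ) (p : MvPolynomial σ A) :
    pderiv i (pderiv j p) = pderiv j (pderiv i p) := by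
  classical
  induction p using MvPolynomial.induction_on with
  | C a => simp
  | add p q hp hq => simp [hp, hq]
  | mul_X p k hp =>
    simp only [pderiv_mul, pderiv_X, map_add, hp, Pi.single_apply]
    split_ifs <;> simp only [pderiv_one, map_zero] <;> ring

theorem pderiv_aeval {σ R A : Type*} [CommSemiring R] [CommSemiring A] [Algebra R A]
    (i : σ) (v : MvPolynomial σ A) (F : R[X]) :
    pderiv i (Polynomial.aeval v F) = Polynomial.aeval v (derivative F) * pderiv i v := by
  rw [← Derivation.restrictScalars_apply R (pderiv i) (Polynomial.aeval v F),
    Derivation.comp_aeval_eq, smul_eq_mul, Derivation.restrictScalars_apply]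

theorem pderiv_pderiv_X_pow_mul_aeval {σ R A : Type*} [CommSemiring R] [CommRing A] [Algebra R A]
    {i j : σ} (hij : i ≠ j) (m : ℕ) (F : R[X]) :
    pderiv i (pderiv j (X i ^ m * Polynomial.aeval (X i * X j - 1 : MvPolynomial σ A) F)) =
      X i ^ m * Polynomial.aeval (X i * X j - 1 : MvPolynomial σ A)
        ((Polynomial.X + 1) * derivative (derivative F) + ((m : R[X]) + 1) * derivative F) := by
  -- differentiating in `X j` first avoids the exponent `m - 1`
  have hj : pderiv j (X i ^ m * Polynomial.aeval (X i * X j - 1 : MvPolynomial σ A) F) =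
      X i ^ (m + 1) * Polynomial.aeval (X i * X j - 1 : MvPolynomial σ A) (derivative F) := by
    simp only [pderiv_mul, pderiv_aeval, pderiv_pow, pderiv_X_self, pderiv_X_of_ne hij,
      map_sub, pderiv_one]
    ring
  rw [hj]
  simp only [pderiv_mul, pderiv_aeval, pderiv_pow, pderiv_X_self, pderiv_X_of_ne hij.symm,
    map_sub, pderiv_one, map_add, map_mul, map_natCast, map_one, Polynomial.aeval_X]
  push_cast
  ring

theorem pderiv_pderiv_one_sub_mul_jacobiHyp {σ A : Type*} [CommRing A] [Algebra ℝ A] {i j : σ}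
    (hij : i ≠ j) (n m : ℕ) :
    pderiv i (pderiv j ((1 - X i * X j) *
        (X i ^ m * Polynomial.aeval (X i * X j - 1 : MvPolynomial σ A) (jacobiHyp 1 m n)))) =
      -(((n + 1) * (n + m + 1) : ℕ) : MvPolynomial σ A) *
        (X i ^ m * Polynomial.aeval (X i * X j - 1 : MvPolynomial σ A) (jacobiHyp 1 m n)) := by
  have hfactor : (1 - X i * X j) *
        (X i ^ m * Polynomial.aeval (X i * X j - 1 : MvPolynomial σ A) (jacobiHyp 1 m n)) =
      -(X i ^ m * Polynomial.aeval (X i * X j - 1) (Polynomial.X * jacobiHyp 1 m n)) := by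
    rw [map_mul, Polynomial.aeval_X]
    ring
  rw [hfactor, map_neg, map_neg, pderiv_pderiv_X_pow_mul_aeval hij,
    show ((m : ℝ[X]) + 1) = Polynomial.C ((m : ℝ) + 1) by simp, jacobiHyp_one_X_mul_ode,
    map_mul, Polynomial.aeval_C]
  push_cast
  ring

theorem exists_zernikeQ_add_left_eq (μ : ℝ) (n m : ℕ) :
    ∃ c : ℂ, zernikeQ μ (n + m) n =
      C c * (X 0 ^ m *
        Polynomial.aeval (X 0 * X 1 - 1 : MvPolynomial (Fin 2) ℂ) (jacobiHyp μ m n)) := by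
  rw [zernikeQ, if_pos (by omega), Nat.add_sub_cancel_left, mul_assoc 2, aeval_jacobiP,
    Algebra.smul_def, MvPolynomial.algebraMap_apply]
  exact ⟨_, by rw [mul_mul_mul_comm, ← map_mul]⟩

theorem exists_zernikeQ_add_right_eq (μ : ℝ) (n m : ℕ) :
    ∃ c : ℂ, zernikeQ μ n (n + m) =
      C c * (X 1 ^ m *
        Polynomial.aeval (X 0 * X 1 - 1 : MvPolynomial (Fin 2) ℂ) (jacobiHyp μ m n)) := by
  rcases Nat.eq_zero_or_pos m with rfl | hm
  · simpa using exists_zernikeQ_add_left_eq μ n 0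
  · rw [zernikeQ, if_neg (by omega), Nat.add_sub_cancel_left, mul_assoc 2, aeval_jacobiP,
      Algebra.smul_def, MvPolynomial.algebraMap_apply]
    exact ⟨_, by rw [mul_mul_mul_comm, ← map_mul]⟩

end

open MvPolynomial in
theorem zernike_eigen_neg_one :
    (C ((2 : ℂ)) * (1 - X 0 * X 1) *
        pderiv (1 : Fin 2) (pderiv (0 : Fin 2) (1 : MvPolynomial (Fin 2) ℂ)) =
      C (((-2 * (0 : ℝ) * (0 : ℝ) : ℝ)) : ℂ) * (1 : MvPolynomial (Fin 2) ℂ)) ∧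
    ∀ k j : ℕ, 1 ≤ k → 1 ≤ j →
      C ((2 : ℂ)) * (1 - X 0 * X 1) *
          pderiv (1 : Fin 2)
            (pderiv (0 : Fin 2) ((1 - X 0 * X 1) * zernikeQ 1 (k - 1) (j - 1))) =
        C (((-2 * (k : ℝ) * (j : ℝ) : ℝ)) : ℂ) *
          ((1 - X 0 * X 1) * zernikeQ 1 (k - 1) (j - 1)) := by
  refine ⟨by simp, fun k j hk hj => ?_⟩
  suffices h : pderiv 1 (pderiv 0 ((1 - X 0 * X 1) * zernikeQ 1 (k - 1) (j - 1))) =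
      -((k * j : ℕ) : MvPolynomial (Fin 2) ℂ) * zernikeQ 1 (k - 1) (j - 1) by
    rw [h]
    push_cast [map_neg, map_mul, map_natCast, map_ofNat]
    ring
  obtain ⟨a, rfl⟩ := Nat.exists_eq_add_of_le' hk
  obtain ⟨b, rfl⟩ := Nat.exists_eq_add_of_le' hj
  simp only [Nat.add_sub_cancel]
  rcases le_total b a with hba | hab
  · obtain ⟨m, rfl⟩ := Nat.exists_eq_add_of_le hba
    obtain ⟨c, hc⟩ := exists_zernikeQ_add_left_eq 1 b m
    rw [hc, mul_left_comm, pderiv_C_mul, pderiv_C_mul, pderiv_pderiv_comm,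
      pderiv_pderiv_one_sub_mul_jacobiHyp (by decide)]
    push_cast
    ring
  · obtain ⟨m, rfl⟩ := Nat.exists_eq_add_of_le hab
    obtain ⟨c, hc⟩ := exists_zernikeQ_add_right_eq 1 a m
    rw [hc, mul_left_comm, pderiv_C_mul, pderiv_C_mul, mul_comm (X 0) (X 1),
      pderiv_pderiv_one_sub_mul_jacobiHyp (by decide)]
    push_cast
    ring
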